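/- arXiv:2510.02587 — 2 statements merged into one kernel-verified Lean document; each statement's English description precedes it below -/
import Mathlib

section
/- For every n ≥ 1, every d ≥ 0, and every family (a_ν) of elements of K indexed by the compositions ν ∈ ℕ^n with |ν| ≤ d, there exists a unique polynomial f ∈ K[x_1,…,x_n] of total degree at most d such that f(ν̃) = a_ν for every composition ν with |ν| ≤ d. In particular, if f has total degree at most d and f(ν̃) = 0 for every composition ν with |ν| ≤ d, then f = 0. -/
open MvPolynomial

noncomputable section
open scoped Classical

/-- The field `K = ℚ(q,t)`. -/
abbrev K : Type := FractionRing (MvPolynomial (Fin 2) ℚ)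

/-- The indeterminate `q` as an element of `K`. -/
def qq : K := algebraMap (MvPolynomial (Fin 2) ℚ) K (X 0)

/-- The indeterminate `t` as an element of `K`. -/
def tt : K := algebraMap (MvPolynomial (Fin 2) ℚ) K (X 1)

/-- The size `|ν|` of a composition. -/
def csize {n : ℕ} (ν : Fin n → ℕ) : ℕ := ∑ i, ν i

/-- `k_i(ν) = #{j < i : ν_j > ν_i} + #{j > i : ν_j ≥ ν_i}`. -/
def kstat {n : ℕ} (ν : Fin n → ℕ) (i : Fin n) : ℕ :=
  Set.ncard {j : Fin n | j < i ∧ ν i < ν j} + Set.ncard {j : Fin n | i < j ∧ ν i ≤ ν j}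

/-- The evaluation point `ν̃ = (q^{ν_i} t^{-k_i(ν)})_i`. -/
def evalPt {n : ℕ} (ν : Fin n → ℕ) : Fin n → K :=
  fun i => qq ^ ν i * tt ^ (-(kstat ν i : ℤ))

/-- Weakly decreasing composition. -/
def IsPartition {n : ℕ} (l : Fin n → ℕ) : Prop := ∀ i j : Fin n, i ≤ j → l j ≤ l i

/-- The action `σ·μ := μ ∘ σ⁻¹`. -/
def permAct {n : ℕ} (σ : Equiv.Perm (Fin n)) (μ : Fin n → ℕ) : Fin n → ℕ := μ ∘ ⇑σ.symm

/-- `S_n(λ)`: the rearrangements of `λ`. -/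
def Sn {n : ℕ} (l : Fin n → ℕ) : Set (Fin n → ℕ) :=
  {μ | ∃ σ : Equiv.Perm (Fin n), permAct σ l = μ}

/-- The rearrangements of `λ` as a `Finset`. -/
def SnFinset {n : ℕ} (l : Fin n → ℕ) : Finset (Fin n → ℕ) :=
  Finset.image (fun σ : Equiv.Perm (Fin n) => permAct σ l) Finset.univ

/-- The exponent `Finsupp` of the monomial `x^μ`. -/
def expOf {n : ℕ} (μ : Fin n → ℕ) : Fin n →₀ ℕ := Finsupp.equivFunOnFinite.symm μ

/-- Characterization of the interpolation nonsymmetric Macdonald polynomial `E*_μ`. -/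
def IsEstar {n : ℕ} (μ : Fin n → ℕ) (f : MvPolynomial (Fin n) K) : Prop :=
  f.totalDegree ≤ csize μ ∧ coeff (expOf μ) f = 1 ∧
    ∀ ν : Fin n → ℕ, csize ν ≤ csize μ → ν ≠ μ → eval (evalPt ν) f = 0

/-- The interpolation nonsymmetric Macdonald polynomial `E*_μ` (unique by Knop–Sahi). -/
def Estar {n : ℕ} (μ : Fin n → ℕ) : MvPolynomial (Fin n) K :=
  if h : ∃ f, IsEstar μ f then h.choose else 0

/-- Characterization of the interpolation (symmetric) Macdonald polynomial `P*_λ`. -/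
def IsPstar {n : ℕ} (l : Fin n → ℕ) (f : MvPolynomial (Fin n) K) : Prop :=
  f.IsSymmetric ∧ f.totalDegree ≤ csize l ∧ coeff (expOf l) f = 1 ∧
    ∀ ν : Fin n → ℕ, IsPartition ν → csize ν ≤ csize l → ν ≠ l → eval (evalPt ν) f = 0

/-- The interpolation Macdonald polynomial `P*_λ`. -/
def Pstar {n : ℕ} (l : Fin n → ℕ) : MvPolynomial (Fin n) K :=
  if h : ∃ f, IsPstar l f then h.choose else 0

/-- The space `V*_λ`. -/
def Vstar {n : ℕ} (l : Fin n → ℕ) : Submodule K (MvPolynomial (Fin n) K) :=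
  (restrictTotalDegree (Fin n) K (csize l)) ⊓
    ⨅ (ν : Fin n → ℕ) (_ : csize ν ≤ csize l ∧ ν ∉ Sn l),
      LinearMap.ker (aeval (R := K) (evalPt ν)).toLinearMap

/-- Exchange of the variables `x_i` and `x_j` in a polynomial. -/
def swapVars {n : ℕ} (i j : Fin n) (f : MvPolynomial (Fin n) K) : MvPolynomial (Fin n) K :=
  rename (Equiv.swap i j) f

/-- Exact division of polynomials: the unique `g` with `a = b * g` when it exists. -/
def exactDiv {n : ℕ} (a b : MvPolynomial (Fin n) K) : MvPolynomial (Fin n) K :=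
  if h : ∃ g, a = b * g then h.choose else 0

/-- The Hecke operator
`T f = t f − ((t x_i − x_j)/(x_i − x_j))·(f − s_i f)` (where `j = i+1`). -/
def hecke {n : ℕ} (i j : Fin n) (f : MvPolynomial (Fin n) K) : MvPolynomial (Fin n) K :=
  C tt * f - (C tt * X i - X j) * exactDiv (f - swapVars i j f) (X i - X j)

/-- The Coxeter length of a permutation (number of inversions). -/
def permLength {n : ℕ} (σ : Equiv.Perm (Fin n)) : ℕ :=
  Set.ncard {p : Fin n × Fin n | p.1 < p.2 ∧ σ p.2 < σ p.1}

/-- The adjacent transposition `s_i = (i, i+1)` (0-indexed). -/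
def adjSwap {n : ℕ} (i : {i : ℕ // i + 1 < n}) : Equiv.Perm (Fin n) :=
  Equiv.swap ⟨i.1, Nat.lt_of_succ_lt i.2⟩ ⟨i.1 + 1, i.2⟩

/-- The Hecke operator `T_i` for an adjacent transposition index. -/
def heckeAt {n : ℕ} (i : {i : ℕ // i + 1 < n}) :
    MvPolynomial (Fin n) K → MvPolynomial (Fin n) K :=
  hecke ⟨i.1, Nat.lt_of_succ_lt i.2⟩ ⟨i.1 + 1, i.2⟩

/-- `T_{i_1} ⋯ T_{i_ℓ} f` for a word `w = [i_1, …, i_ℓ]`. -/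
def Tword {n : ℕ} (w : List {i : ℕ // i + 1 < n}) (f : MvPolynomial (Fin n) K) :
    MvPolynomial (Fin n) K :=
  w.foldr heckeAt f

/-- `w` is a reduced word for `σ`. -/
def IsReducedWordOf {n : ℕ} (w : List {i : ℕ // i + 1 < n}) (σ : Equiv.Perm (Fin n)) : Prop :=
  (w.map adjSwap).prod = σ ∧ w.length = permLength σ

/-- `T_σ`, computed from a reduced word of `σ` (independent of the choice, by the
Hecke algebra relations). -/
def Tsigma {n : ℕ} (σ : Equiv.Perm (Fin n)) :
    MvPolynomial (Fin n) K → MvPolynomial (Fin n) K :=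
  if h : ∃ w, IsReducedWordOf w σ then Tword h.choose else id

/-- `σ_μ`: the (unique) shortest permutation with `σ·l = μ`. -/
def sigmaMin {n : ℕ} (l μ : Fin n → ℕ) : Equiv.Perm (Fin n) :=
  if h : ∃ σ, permAct σ l = μ ∧ ∀ τ, permAct τ l = μ → permLength σ ≤ permLength τ then
    h.choose else 1

/-- The weakly decreasing rearrangement of a composition. -/
def sortDesc {n : ℕ} (μ : Fin n → ℕ) : Fin n → ℕ :=
  if h : ∃ l, IsPartition l ∧ μ ∈ Sn l then h.choose else μ

/-- The interpolation ASEP polynomial `f*_μ = T_{σ_μ} E*_λ`, where `λ` is the weakly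
decreasing rearrangement of `μ`. -/
def fstar {n : ℕ} (μ : Fin n → ℕ) : MvPolynomial (Fin n) K :=
  Tsigma (sigmaMin (sortDesc μ) μ) (Estar (sortDesc μ))

/-- The composition with entries `i` and `j` exchanged. -/
def swapEntries {n : ℕ} (i j : Fin n) (μ : Fin n → ℕ) : Fin n → ℕ := μ ∘ ⇑(Equiv.swap i j)

/-!
The content is injectivity: polynomials of total degree `≤ d` and compositions of size
`≤ d` are equinumerous, so once evaluation at the points `ν̃` is injective it is bijective.
Injectivity is Knop–Sahi's double induction on `n` and `d`. If `f` vanishes at every `ν̃` with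
`|ν| ≤ d`, then `f(t^{1-n}, x_2, …, x_n)` vanishes at every `ν̃'`, `ν' ∈ ℕ^{n-1}`, `|ν'| ≤ d`,
because `(0, ν')~ = (t^{1-n}, ν̃')`; so `f = (x_1 - t^{1-n}) h`. The cofactor `h` vanishes at
`ν̃` whenever `ν_1 ≠ 0`, since then `ν̃_1` carries a positive power of `q`. Finally
`h(q x_n, x_1, …, x_{n-1})` has degree `≤ d - 1` and vanishes at every `μ̃` with `|μ| ≤ d - 1`,
because its value there is `h` at `(Φμ)~`, where `Φμ = (μ_n + 1, μ_1, …, μ_{n-1})`.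
Both point identities come from reading `k_i(ν)` as the number of `j` whose key `(ν_j, j)` is
lexicographically above `(ν_i, i)`.
-/

section Generic

variable {R σ τ : Type*}

lemma totalDegree_bind₁_le [CommSemiring R] {ψ : σ → MvPolynomial τ R}
    (hψ : ∀ i, (ψ i).totalDegree ≤ 1) (f : MvPolynomial σ R) :
    (bind₁ ψ f).totalDegree ≤ f.totalDegree := by
  rw [← aeval_eq_bind₁, aeval_def, eval₂_eq]
  refine (totalDegree_finsetSum _ _).trans (Finset.sup_le fun s hs => ?_)
  refine (totalDegree_mul _ _).trans ?_
  rw [MvPolynomial.algebraMap_apply, totalDegree_C, zero_add]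
  refine (totalDegree_finsetProd _ _).trans (le_trans ?_ (le_totalDegree hs))
  refine Finset.sum_le_sum fun i _ => (totalDegree_pow _ _).trans ?_
  simpa using Nat.mul_le_mul_left (s i) (hψ i)

lemma eval_bind₁ [CommSemiring R] (x : τ → R) (ψ : σ → MvPolynomial τ R)
    (f : MvPolynomial σ R) : eval x (bind₁ ψ f) = eval (fun i => eval x (ψ i)) f := by
  simpa only [aeval_eq_eval] using aeval_bind₁ x ψ f

lemma totalDegree_X_sub_C [CommRing R] [Nontrivial R] (i : σ) (c : R) :
    (X i - C c : MvPolynomial σ R).totalDegree = 1 := by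
  refine le_antisymm ((totalDegree_sub_C_le _ _).trans (totalDegree_X i).le) ?_
  have hmem : Finsupp.single i 1 ∈ (X i - C c : MvPolynomial σ R).support := by
    rw [mem_support_iff, coeff_sub, coeff_C,
      if_neg (Finsupp.single_ne_zero.mpr (one_ne_zero (α := ℕ))).symm, sub_zero, coeff_X]
    simp
  simpa using le_totalDegree hmem

lemma X_zero_sub_C_dvd_of_bind₁_cons_eq_zero [CommRing R] {m : ℕ} {c : R}
    {f : MvPolynomial (Fin (m + 1)) R}
    (hf : bind₁ (Fin.cons (C c) X : Fin (m + 1) → MvPolynomial (Fin m) R) f = 0) :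
    X 0 - C c ∣ f := by
  have heval : Polynomial.eval (C c) (finSuccEquiv R m f) =
      bind₁ (Fin.cons (C c) X : Fin (m + 1) → MvPolynomial (Fin m) R) f := by
    clear hf
    induction f using MvPolynomial.induction_on with
    | C a => simp [finSuccEquiv_apply]
    | add p q hp hq => simp [hp, hq]
    | mul_X p i hp => cases i using Fin.cases <;> simp [finSuccEquiv_apply, ← hp]
  obtain ⟨g, hg⟩ := Polynomial.dvd_iff_isRoot.mpr (heval.trans hf)
  refine ⟨(finSuccEquiv R m).symm g, (finSuccEquiv R m).injective ?_⟩
  rw [hg, map_mul, AlgEquiv.apply_symm_apply]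
  simp [finSuccEquiv_apply]

lemma bind₁_injective_of_bind₁_comp [CommSemiring R] {ψ : σ → MvPolynomial τ R}
    {χ : τ → MvPolynomial σ R} (h : ∀ i, bind₁ χ (ψ i) = X i) : Function.Injective (bind₁ ψ) :=
  Function.LeftInverse.injective (g := bind₁ χ) fun f => by
    rw [bind₁_bind₁, funext h, bind₁_X_left, AlgHom.id_apply]

theorem existsUnique_eval_eq_of_forall_eval_eq_zero {F ι : Type*} [Field F] [Finite ι]
    {V : Submodule F (MvPolynomial σ F)} [FiniteDimensional F V]
    (hdim : Module.finrank F V = Nat.card ι) (x : ι → σ → F)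
    (hx : ∀ p ∈ V, (∀ i, eval (x i) p = 0) → p = 0) (a : ι → F) :
    ∃! p, p ∈ V ∧ ∀ i, eval (x i) p = a i := by
  have := Fintype.ofFinite ι
  let L : V →ₗ[F] ι → F := LinearMap.pi fun i => (aeval (x i)).toLinearMap ∘ₗ V.subtype
  have hL : Function.Injective L := by
    refine (injective_iff_map_eq_zero L).mpr fun p hp => Subtype.ext (hx p p.2 fun i => ?_)
    exact congrFun hp i
  obtain ⟨p, hp⟩ := (LinearMap.injective_iff_surjective_of_finrank_eq_finrank
    (by rw [hdim, Module.finrank_fintype_fun_eq_card, Nat.card_eq_fintype_card])).mp hL a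
  refine ⟨p, ⟨p.2, fun i => congrFun hp i⟩, fun q ⟨hqV, hq⟩ => ?_⟩
  exact congrArg Subtype.val (hL (a₁ := ⟨q, hqV⟩) (hp.symm ▸ funext hq))

lemma finRotate_castSucc {m : ℕ} (i : Fin m) : finRotate (m + 1) i.castSucc = i.succ := by
  ext
  rw [coe_finRotate_of_ne_last (Fin.castSucc_lt_last i).ne]
  simp

end Generic

lemma tt_ne_zero : tt ≠ 0 :=
  IsFractionRing.to_map_ne_zero_of_mem_nonZeroDivisors <|
    mem_nonZeroDivisors_of_ne_zero (X_ne_zero 1)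

lemma qq_ne_zero : qq ≠ 0 :=
  IsFractionRing.to_map_ne_zero_of_mem_nonZeroDivisors <|
    mem_nonZeroDivisors_of_ne_zero (X_ne_zero 0)

lemma qq_pow_mul_tt_zpow_inj {a b c e : ℕ}
    (h : qq ^ a * tt ^ (-(b : ℤ)) = qq ^ c * tt ^ (-(e : ℤ))) : a = c ∧ b = e := by
  have hpow : qq ^ a * tt ^ e = qq ^ c * tt ^ b := by
    have := congrArg (· * tt ^ ((b : ℤ) + e)) h
    simp only [mul_assoc, ← zpow_add₀ tt_ne_zero] at this
    simpa [← zpow_natCast, add_comm] using this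
  have hmon : (X 0 : MvPolynomial (Fin 2) ℚ) ^ a * X 1 ^ e = X 0 ^ c * X 1 ^ b :=
    IsFractionRing.injective (MvPolynomial (Fin 2) ℚ) K (by simpa [qq, tt] using hpow)
  simp only [X_pow_eq_monomial, monomial_mul, one_mul, monomial_eq_monomial_iff,
    one_ne_zero, and_false, or_false] at hmon
  have h0 := DFunLike.congr_fun hmon.1 0
  have h1 := DFunLike.congr_fun hmon.1 1
  simp at h0 h1
  exact ⟨h0, h1.symm⟩

lemma evalPt_apply_ne_tt_zpow {n : ℕ} {ν : Fin n → ℕ} {i : Fin n} (hν : ν i ≠ 0) (k : ℕ) :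
    evalPt ν i ≠ tt ^ (-(k : ℤ)) := fun h =>
  hν (qq_pow_mul_tt_zpow_inj (c := 0) (by simpa [evalPt] using h)).1

lemma kstat_eq_ncard {n : ℕ} (ν : Fin n → ℕ) (i : Fin n) :
    kstat ν i = {j | toLex (ν i, i) < toLex (ν j, j)}.ncard := by
  rw [kstat, ← Set.ncard_union_eq _ (Set.toFinite _) (Set.toFinite _)]
  · congr 1
    ext j
    simp only [Set.mem_union, Set.mem_ofPred_eq, Prod.Lex.toLex_lt_toLex]
    rcases lt_trichotomy j i with h | rfl | h <;> grind
  · exact Set.disjoint_left.mpr fun j h₁ h₂ => lt_asymm h₁.1 h₂.1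

lemma kstat_apply_embedding {m n : ℕ} {μ : Fin m → ℕ} {ν : Fin n → ℕ} (e : Fin m ↪ Fin n)
    (i : Fin m)
    (hkey : ∀ j, toLex (ν (e i), e i) < toLex (ν (e j), e j) ↔ toLex (μ i, i) < toLex (μ j, j))
    (hout : ∀ j ∉ Set.range e, ¬ toLex (ν (e i), e i) < toLex (ν j, j)) :
    kstat ν (e i) = kstat μ i := by
  rw [kstat_eq_ncard, kstat_eq_ncard, ← Set.ncard_image_of_injective _ e.injective]
  congr 1
  ext j
  by_cases hj : j ∈ Set.range e
  · obtain ⟨k, rfl⟩ := hj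
    simp [hkey, e.injective.eq_iff]
  · simp only [Set.mem_ofPred_eq, hout j hj, false_iff]
    rintro ⟨k, -, rfl⟩
    exact hj ⟨k, rfl⟩

lemma kstat_cons_zero_zero {m : ℕ} (ν : Fin m → ℕ) :
    kstat (Fin.cons 0 ν : Fin (m + 1) → ℕ) 0 = m := by
  rw [kstat_eq_ncard]
  have : {j : Fin (m + 1) | toLex ((Fin.cons 0 ν : Fin (m + 1) → ℕ) 0, (0 : Fin (m + 1))) <
      toLex ((Fin.cons 0 ν : Fin (m + 1) → ℕ) j, j)} = {0}ᶜ := by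
    ext j
    cases j using Fin.cases
    · simp
    · simp [Prod.Lex.toLex_lt_toLex, Fin.succ_pos]
      omega
  rw [this, Set.ncard_compl, Set.ncard_singleton, Nat.card_eq_fintype_card, Fintype.card_fin]
  rfl

lemma kstat_cons_zero_succ {m : ℕ} (ν : Fin m → ℕ) (i : Fin m) :
    kstat (Fin.cons 0 ν : Fin (m + 1) → ℕ) i.succ = kstat ν i := by
  refine kstat_apply_embedding (Fin.succEmb m) i (fun j => ?_) (fun j hj => ?_)
  · simp [Prod.Lex.toLex_lt_toLex]
  · obtain rfl : j = 0 := by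
      cases j using Fin.cases with
      | zero => rfl
      | succ k => exact absurd ⟨k, rfl⟩ hj
    simp [Prod.Lex.toLex_lt_toLex]

def raise {m : ℕ} (μ : Fin (m + 1) → ℕ) : Fin (m + 1) → ℕ :=
  Fin.cons (μ (Fin.last m) + 1) (μ ∘ Fin.castSucc)

lemma raise_finRotate {m : ℕ} (μ : Fin (m + 1) → ℕ) (i : Fin (m + 1)) :
    raise μ (finRotate (m + 1) i) = μ i + if i = Fin.last m then 1 else 0 := by
  cases i using Fin.lastCases with
  | last => simp [raise]
  | cast k => simp [raise, (Fin.castSucc_lt_last k).ne]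

lemma kstat_raise_finRotate {m : ℕ} (μ : Fin (m + 1) → ℕ) (i : Fin (m + 1)) :
    kstat (raise μ) (finRotate (m + 1) i) = kstat μ i := by
  refine kstat_apply_embedding (finRotate (m + 1)).toEmbedding i (fun j => ?_)
    (fun j hj => absurd ⟨(finRotate (m + 1)).symm j, by simp⟩ hj)
  simp only [Equiv.coe_toEmbedding, raise_finRotate, Prod.Lex.toLex_lt_toLex]
  cases i using Fin.lastCases <;> cases j using Fin.lastCases <;>
    simp only [finRotate_last, finRotate_castSucc] <;>
    simp [← Fin.val_fin_lt, (Fin.castSucc_lt_last _).ne] <;> omega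

lemma evalPt_cons_zero {m : ℕ} (ν : Fin m → ℕ) :
    evalPt (Fin.cons 0 ν : Fin (m + 1) → ℕ) = Fin.cons (tt ^ (-(m : ℤ))) (evalPt ν) := by
  ext i
  cases i using Fin.cases with
  | zero => simp [evalPt, kstat_cons_zero_zero]
  | succ k => simp [evalPt, kstat_cons_zero_succ]

lemma evalPt_raise {m : ℕ} (μ : Fin (m + 1) → ℕ) :
    evalPt (raise μ) = Fin.cons (qq * evalPt μ (Fin.last m)) (evalPt μ ∘ Fin.castSucc) := by
  ext i
  cases i using Fin.cases with
  | zero =>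
    have hk := kstat_raise_finRotate μ (Fin.last m)
    rw [finRotate_last] at hk
    rw [Fin.cons_zero, evalPt, evalPt, hk]
    simp only [raise, Fin.cons_zero, pow_succ]
    ring
  | succ k =>
    have hk := kstat_raise_finRotate μ k.castSucc
    rw [finRotate_castSucc] at hk
    rw [Fin.cons_succ, Function.comp_apply, evalPt, evalPt, hk]
    simp [raise]

lemma csize_cons {m : ℕ} (a : ℕ) (ν : Fin m → ℕ) :
    csize (Fin.cons a ν : Fin (m + 1) → ℕ) = a + csize ν := by
  simp [csize, Fin.sum_univ_succ]

lemma csize_raise {m : ℕ} (μ : Fin (m + 1) → ℕ) : csize (raise μ) = csize μ + 1 := by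
  rw [raise, csize_cons, csize, csize, Fin.sum_univ_castSucc]
  simp only [Function.comp_apply]
  omega

def raiseSubst (m : ℕ) : Fin (m + 1) → MvPolynomial (Fin (m + 1)) K :=
  Fin.cons (C qq * X (Fin.last m)) (X ∘ Fin.castSucc)

lemma eval_evalPt_raise {m : ℕ} (μ : Fin (m + 1) → ℕ) (f : MvPolynomial (Fin (m + 1)) K) :
    eval (evalPt (raise μ)) f = eval (evalPt μ) (bind₁ (raiseSubst m) f) := by
  rw [eval_bind₁, evalPt_raise]
  congr 2
  funext i
  cases i using Fin.cases <;> simp [raiseSubst]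

lemma bind₁_raiseSubst_injective (m : ℕ) : Function.Injective (bind₁ (raiseSubst m)) := by
  refine bind₁_injective_of_bind₁_comp (χ := Fin.snoc (X ∘ Fin.succ) (C qq⁻¹ * X 0)) fun i => ?_
  cases i using Fin.cases with
  | zero =>
    simp only [raiseSubst, Fin.cons_zero, map_mul, bind₁_C_right, bind₁_X_right, Fin.snoc_last]
    rw [← mul_assoc, ← C_mul, mul_inv_cancel₀ qq_ne_zero, C_1, one_mul]
  | succ k => simp [raiseSubst]

lemma eval_evalPt_cons_zero {m : ℕ} (ν : Fin m → ℕ) (f : MvPolynomial (Fin (m + 1)) K) :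
    eval (evalPt (Fin.cons 0 ν : Fin (m + 1) → ℕ)) f =
      eval (evalPt ν) (bind₁ (Fin.cons (C (tt ^ (-(m : ℤ)))) X) f) := by
  rw [eval_bind₁, evalPt_cons_zero]
  congr 2
  funext i
  cases i using Fin.cases <;> simp

theorem eq_zero_of_eval_evalPt_eq_zero {n d : ℕ} {f : MvPolynomial (Fin n) K}
    (hdeg : f.totalDegree ≤ d) (hvan : ∀ ν : Fin n → ℕ, csize ν ≤ d → eval (evalPt ν) f = 0) :
    f = 0 := by
  induction n generalizing d with
  | zero =>
    rw [eq_C_of_isEmpty f] at hvan ⊢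
    simpa using hvan 0 (by simp [csize])
  | succ m ihn =>
    induction d using Nat.strong_induction_on generalizing f with
    | _ d ihd =>
      set c : K := tt ^ (-(m : ℤ))
      obtain ⟨h, rfl⟩ : X 0 - C c ∣ f := by
        refine X_zero_sub_C_dvd_of_bind₁_cons_eq_zero
          (ihn ((totalDegree_bind₁_le (fun i => ?_) f).trans hdeg) fun ν hν => ?_)
        · cases i using Fin.cases <;> simp [totalDegree_X]
        · rw [← eval_evalPt_cons_zero]
          exact hvan _ (by rwa [csize_cons, zero_add])
      suffices h = 0 by rw [this, mul_zero]
      by_contra hh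
      have hX : (X 0 - C c : MvPolynomial (Fin (m + 1)) K) ≠ 0 := fun h0 => by
        simpa [h0] using totalDegree_X_sub_C (0 : Fin (m + 1)) c
      rw [totalDegree_mul_of_isDomain hX hh, totalDegree_X_sub_C] at hdeg
      obtain ⟨e, rfl⟩ : ∃ e, d = e + 1 := ⟨d - 1, by omega⟩
      have hvan_h : ∀ ν : Fin (m + 1) → ℕ, ν 0 ≠ 0 → csize ν ≤ e + 1 → eval (evalPt ν) h = 0 := by
        intro ν hν0 hν
        have := hvan ν hν
        rw [map_mul, map_sub, eval_X, eval_C] at this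
        exact (mul_eq_zero.mp this).resolve_left (sub_ne_zero.mpr (evalPt_apply_ne_tt_zpow hν0 m))
      refine hh (bind₁_raiseSubst_injective m ?_)
      rw [map_zero]
      refine ihd e (by omega) ((totalDegree_bind₁_le (fun i => ?_) h).trans (by omega))
        fun μ hμ => ?_
      · cases i using Fin.cases
        · exact (totalDegree_mul _ _).trans (by simp [totalDegree_X])
        · simp [raiseSubst, totalDegree_X]
      · rw [← eval_evalPt_raise]
        exact hvan_h _ (by simp [raise]) (by rw [csize_raise]; omega)

instance (n d : ℕ) : Finite {ν : Fin n → ℕ // csize ν ≤ d} :=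
  Set.Finite.to_subtype <| (Set.Finite.pi fun _ => Set.finite_Iic d).subset fun ν hν i _ =>
    (Finset.single_le_sum (fun j _ => Nat.zero_le (ν j)) (Finset.mem_univ i)).trans hν

lemma finrank_restrictTotalDegree (n d : ℕ) :
    Module.finrank K (restrictTotalDegree (Fin n) K d) =
      Nat.card {ν : Fin n → ℕ // csize ν ≤ d} := by
  rw [restrictTotalDegree, Module.finrank_eq_nat_card_basis (basisRestrictSupport K _)]
  exact Nat.card_congr (Finsupp.equivFunOnFinite.subtypeEquiv fun s => by
    simp [csize, Finsupp.sum_fintype])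

theorem statement0_general (n d : ℕ) (a : (Fin n → ℕ) → K) :
    (∃! f : MvPolynomial (Fin n) K, f.totalDegree ≤ d ∧
        ∀ ν : Fin n → ℕ, csize ν ≤ d → eval (evalPt ν) f = a ν) ∧
    (∀ f : MvPolynomial (Fin n) K, f.totalDegree ≤ d →
        (∀ ν : Fin n → ℕ, csize ν ≤ d → eval (evalPt ν) f = 0) → f = 0) := by
  refine ⟨?_, fun f => eq_zero_of_eval_evalPt_eq_zero⟩
  simpa only [mem_restrictTotalDegree, Subtype.forall] using
    existsUnique_eval_eq_of_forall_eval_eq_zero (finrank_restrictTotalDegree n d)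
      (fun ν => evalPt ν.1)
      (fun p hp hv => eq_zero_of_eval_evalPt_eq_zero ((mem_restrictTotalDegree _ _ _).mp hp)
        fun ν hν => hv ⟨ν, hν⟩) (fun ν => a ν.1)

/-- Knop–Sahi interpolation theorem. -/
theorem statement0 (n d : ℕ) (hn : 1 ≤ n) (a : (Fin n → ℕ) → K) :
    (∃! f : MvPolynomial (Fin n) K, f.totalDegree ≤ d ∧
        ∀ ν : Fin n → ℕ, csize ν ≤ d → eval (evalPt ν) f = a ν) ∧
    (∀ f : MvPolynomial (Fin n) K, f.totalDegree ≤ d →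
        (∀ ν : Fin n → ℕ, csize ν ≤ d → eval (evalPt ν) f = 0) → f = 0) :=
  statement0_general n d a
end
end

section
/- For each partition λ = (λ_1 ≥ ⋯ ≥ λ_n ≥ 0) there exists a unique symmetric polynomial P*_λ ∈ K[x_1,…,x_n] of total degree at most |λ| such that the coefficient of the monomial x^λ = x_1^{λ_1}⋯x_n^{λ_n} in P*_λ equals 1 and P*_λ(ν̃) = 0 for every partition ν ≠ λ with |ν| ≤ |λ|. -/
open MvPolynomial

noncomputable section
open scoped Classical

/-!
Let `v` be the valuation of `K` measuring the degree in `q`, so that `v(ν̃ᵢ) = exp νᵢ` whatever the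
power of `t`. For a nonzero symmetric `f = ∑ c_β x^β` the weight `2 deg_q c_β + ⟨β, β⟩` is invariant
under permuting `β`, so it attains its maximum at a partition `μ`. At `μ̃` the term `c_β x^β` has
degree `deg_q c_β + ⟨β, μ⟩`, and `2⟨β, μ⟩ < ⟨β, β⟩ + ⟨μ, μ⟩` for `β ≠ μ`, so the term `c_μ x^μ`
strictly dominates and `f(μ̃) ≠ 0`, with `|μ| ≤ deg f`. Hence a symmetric polynomial of degree `≤ d`
vanishing at `ν̃` for all partitions `|ν| ≤ d` is zero. Applied to combinations of the monomial
symmetric polynomials `m_μ`, `|μ| ≤ d`, this makes the square interpolation system invertible;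
interpolating the indicator of `λ` and normalising gives `P*_λ`, and uniqueness is the same
vanishing argument.
-/

open MvPolynomial WithZero

namespace InterpolationMacdonald

variable {n : ℕ}

lemma exists_perm_isPartition (β : Fin n → ℕ) : ∃ π : Equiv.Perm (Fin n), IsPartition (β ∘ π) :=
  ⟨Fin.revPerm.trans (Tuple.sort β), fun _ _ hij => Tuple.monotone_sort β (Fin.rev_le_rev.2 hij)⟩

lemma _root_.IsPartition.comp_perm_eq {a : Fin n → ℕ} (ha : IsPartition a) {π : Equiv.Perm (Fin n)}
    (hπ : IsPartition (a ∘ π)) : a ∘ π = a := by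
  have hrev : ∀ {b : Fin n → ℕ}, IsPartition b → Monotone (b ∘ Fin.rev) :=
    fun hb _ _ hij => hb _ _ (Fin.rev_le_rev.2 hij)
  have h := Tuple.unique_monotone (f := a) (σ := Fin.revPerm.trans π) (τ := Fin.revPerm)
    (hrev hπ) (hrev ha)
  funext j
  simpa using congrFun h (Fin.rev j)

lemma mem_SnFinset_iff_eq {μ ν : Fin n → ℕ} (hμ : IsPartition μ) (hν : IsPartition ν) :
    ν ∈ SnFinset μ ↔ ν = μ := by
  simp only [SnFinset, Finset.mem_image, Finset.mem_univ, true_and, permAct]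
  constructor
  · rintro ⟨σ, rfl⟩
    exact hμ.comp_perm_eq hν
  · rintro rfl
    exact ⟨1, rfl⟩

lemma csize_comp_perm (a : Fin n → ℕ) (π : Equiv.Perm (Fin n)) : csize (a ∘ π) = csize a :=
  Equiv.sum_comp π a

def partitionsOfSizeLE (n d : ℕ) : Finset (Fin n → ℕ) :=
  (Fintype.piFinset fun _ => Finset.range (d + 1)).filter fun ν => IsPartition ν ∧ csize ν ≤ d

lemma mem_partitionsOfSizeLE {d : ℕ} {ν : Fin n → ℕ} :
    ν ∈ partitionsOfSizeLE n d ↔ IsPartition ν ∧ csize ν ≤ d := by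
  simp only [partitionsOfSizeLE, Finset.mem_filter, Fintype.mem_piFinset, Finset.mem_range,
    and_iff_right_iff_imp]
  exact fun ⟨_, hν⟩ i =>
    Nat.lt_succ_of_le ((Finset.single_le_sum (by simp) (Finset.mem_univ i)).trans hν)

lemma two_mul_sum_mul_lt {ι R : Type*} [Fintype ι] [CommRing R] [LinearOrder R]
    [IsStrictOrderedRing R] {a b : ι → R} (h : a ≠ b) :
    2 * ∑ i, a i * b i < ∑ i, a i * a i + ∑ i, b i * b i := by
  obtain ⟨j, hj⟩ := Function.ne_iff.1 h
  have hpos : 0 < ∑ i, (a i - b i) ^ 2 :=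
    Finset.sum_pos' (fun i _ => sq_nonneg _) ⟨j, Finset.mem_univ j, by
      simpa [sq_pos_iff, sub_ne_zero] using hj⟩
  have hexpand : ∑ i, (a i - b i) ^ 2 = ∑ i, a i * a i + ∑ i, b i * b i - 2 * ∑ i, a i * b i := by
    simp only [sub_sq, Finset.sum_add_distrib, Finset.sum_sub_distrib, Finset.mul_sum]
    ring_nf
  linarith

section MonomialSymm

variable {R : Type*} [CommSemiring R]

lemma coe_expOf (μ : Fin n → ℕ) : ⇑(expOf μ) = μ := rfl

lemma expOf_injective : Function.Injective (expOf (n := n)) :=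
  Finsupp.equivFunOnFinite.symm.injective

lemma rename_monomial_expOf (τ : Equiv.Perm (Fin n)) (β : Fin n → ℕ) (r : R) :
    rename τ (monomial (expOf β) r) = monomial (expOf (permAct τ β)) r := by
  rw [rename_monomial]
  congr 2
  exact Finsupp.ext fun a => by rw [Finsupp.mapDomain_equiv_apply]; rfl

lemma _root_.MvPolynomial.IsSymmetric.coeff_expOf_comp_perm {f : MvPolynomial (Fin n) R}
    (hf : f.IsSymmetric) (β : Fin n →₀ ℕ) (π : Equiv.Perm (Fin n)) :
    coeff (expOf (β ∘ π)) f = coeff β f := by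
  have h : expOf (β ∘ π) = Finsupp.mapDomain π.symm β := by
    ext a
    rw [Finsupp.mapDomain_equiv_apply]
    simp [coe_expOf]
  rw [h, ← coeff_rename_mapDomain _ π.symm.injective f β, hf]

lemma csize_le_totalDegree {f : MvPolynomial (Fin n) R} {μ : Fin n → ℕ}
    (h : coeff (expOf μ) f ≠ 0) : csize μ ≤ f.totalDegree := by
  have := le_totalDegree (mem_support_iff.2 h)
  rwa [Finsupp.sum_fintype _ _ fun _ => rfl] at this

variable (R) in
def monomialSymm (μ : Fin n → ℕ) : MvPolynomial (Fin n) R :=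
  ∑ β ∈ SnFinset μ, monomial (expOf β) 1

lemma permAct_mem_SnFinset {μ β : Fin n → ℕ} (τ : Equiv.Perm (Fin n)) (hβ : β ∈ SnFinset μ) :
    permAct τ β ∈ SnFinset μ := by
  obtain ⟨σ, -, rfl⟩ := Finset.mem_image.1 hβ
  exact Finset.mem_image.2 ⟨τ * σ, Finset.mem_univ _, rfl⟩

lemma monomialSymm_isSymmetric (μ : Fin n → ℕ) : (monomialSymm R μ).IsSymmetric := by
  intro τ
  simp only [monomialSymm, map_sum, rename_monomial_expOf]
  refine Finset.sum_nbij' (permAct τ) (permAct τ⁻¹) (fun _ => permAct_mem_SnFinset τ)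
    (fun _ => permAct_mem_SnFinset τ⁻¹) (fun β _ => ?_) (fun β _ => ?_) (fun _ _ => rfl)
  all_goals ext i; simp [permAct, Equiv.Perm.inv_def]

lemma coeff_monomialSymm (μ ν : Fin n → ℕ) :
    coeff (expOf ν) (monomialSymm R μ) = if ν ∈ SnFinset μ then 1 else 0 := by
  simp only [monomialSymm, coeff_sum, coeff_monomial, expOf_injective.eq_iff]
  exact Finset.sum_ite_eq' _ _ _

lemma totalDegree_monomialSymm_le (μ : Fin n → ℕ) : (monomialSymm R μ).totalDegree ≤ csize μ := by
  refine (totalDegree_finsetSum _ _).trans (Finset.sup_le fun β hβ => ?_)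
  obtain ⟨σ, -, rfl⟩ := Finset.mem_image.1 hβ
  refine (totalDegree_monomial_le _ _).trans_eq ?_
  rw [Finsupp.sum_fintype _ _ fun _ => rfl]
  exact csize_comp_perm μ σ.symm

end MonomialSymm

/-- `ℚ(t)`. Below, `K` is embedded into `ℚ(t)(q)` by `q ↦ X`, `t ↦ C t`, so that the valuation at
infinity `qVal` measures the degree in `q`, with `qVal q = exp 1` and `qVal t = 1`. -/
abbrev L : Type := FractionRing (MvPolynomial (Fin 1) ℚ)

def qExpand : MvPolynomial (Fin 2) ℚ →+* RatFunc L :=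
  (algebraMap (Polynomial L) (RatFunc L)).comp
    ((Polynomial.mapRingHom (algebraMap (MvPolynomial (Fin 1) ℚ) L)).comp
      (finSuccEquiv ℚ 1).toRingHom)

lemma qExpand_injective : Function.Injective qExpand :=
  (IsFractionRing.injective (Polynomial L) (RatFunc L)).comp <|
    (Polynomial.map_injective _ (IsFractionRing.injective _ L)).comp (finSuccEquiv ℚ 1).injective

def qVal : Valuation K ℤᵐ⁰ :=
  (RatFunc.inftyValuation L).comap (IsFractionRing.lift qExpand_injective)

lemma qVal_algebraMap (p : MvPolynomial (Fin 2) ℚ) :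
    qVal (algebraMap _ K p) = RatFunc.inftyValuation L (qExpand p) := by
  rw [qVal, Valuation.comap_apply, IsFractionRing.lift_algebraMap]

lemma qVal_qq : qVal qq = exp 1 := by
  rw [qq, qVal_algebraMap, qExpand]
  simp [finSuccEquiv_X_zero]

lemma qVal_tt : qVal tt = 1 := by
  have hX : finSuccEquiv ℚ 1 (X 1) = Polynomial.C (X 0) := finSuccEquiv_X_succ (j := 0)
  rw [tt, qVal_algebraMap, qExpand]
  simp [hX, RatFunc.algebraMap_C]

lemma _root_.WithZero.exp_sum {ι M : Type*} [AddCommMonoid M] (s : Finset ι) (f : ι → M) :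
    exp (∑ i ∈ s, f i) = ∏ i ∈ s, exp (f i) := by
  classical
  induction s using Finset.induction_on with
  | empty => simp
  | insert a s ha ih => rw [Finset.sum_insert ha, Finset.prod_insert ha, exp_add, ih]

lemma qVal_coeff_mul_prod_evalPt (μ : Fin n → ℕ) (d : Fin n →₀ ℕ) {c : K} (hc : c ≠ 0) :
    qVal (c * ∏ i, evalPt μ i ^ d i) = exp (log (qVal c) + ∑ i, (d i : ℤ) * μ i) := by
  simp only [map_mul, map_prod, map_pow, evalPt, map_zpow₀, qVal_qq, qVal_tt, one_zpow, mul_one,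
    exp_add, exp_sum, exp_log ((qVal.ne_zero_iff).2 hc)]
  congr 1
  refine Finset.prod_congr rfl fun i _ => ?_
  rw [← pow_mul, ← exp_nsmul]
  simp [mul_comm]

theorem exists_isPartition_coeff_ne_zero_eval_ne_zero {f : MvPolynomial (Fin n) K} (hf : f ≠ 0)
    (hsym : f.IsSymmetric) :
    ∃ μ, IsPartition μ ∧ coeff (expOf μ) f ≠ 0 ∧ eval (evalPt μ) f ≠ 0 := by
  let w : (Fin n →₀ ℕ) → ℤ := fun β => 2 * log (qVal (coeff β f)) + ∑ i, (β i : ℤ) * β i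
  obtain ⟨β, hβ, hmax⟩ := f.support.exists_max_image w (support_nonempty.2 hf)
  obtain ⟨π, hπ⟩ := exists_perm_isPartition β
  set μ := ⇑β ∘ π
  have hcoeff : coeff (expOf μ) f = coeff β f := hsym.coeff_expOf_comp_perm β π
  have hμβ : ∑ i, (μ i : ℤ) * μ i = ∑ i, (β i : ℤ) * β i :=
    Equiv.sum_comp π fun i => (β i : ℤ) * β i
  have hμf : coeff (expOf μ) f ≠ 0 := hcoeff ▸ mem_support_iff.1 hβ
  refine ⟨μ, hπ, hμf, ?_⟩
  rw [eval_eq', ← qVal.ne_zero_iff, qVal.map_sum_eq_of_lt (mem_support_iff.2 hμf)]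
  · rw [qVal.ne_zero_iff]
    exact mul_ne_zero hμf (Finset.prod_ne_zero_iff.2 fun i _ => by simp [evalPt, qq, tt])
  intro d hd
  obtain ⟨hdf, hdμ⟩ : d ∈ f.support ∧ d ≠ expOf μ := by simpa using hd
  rw [qVal_coeff_mul_prod_evalPt μ d (mem_support_iff.1 hdf), qVal_coeff_mul_prod_evalPt μ _ hμf,
    exp_lt_exp]
  have hne : (fun i => (d i : ℤ)) ≠ fun i => (μ i : ℤ) := fun h =>
    hdμ (Finsupp.ext fun i => by exact_mod_cast congrFun h i)
  have hkey := two_mul_sum_mul_lt hne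
  have hw := hmax d hdf
  simp only [w, hcoeff, coe_expOf] at hw hkey ⊢
  linarith

theorem _root_.MvPolynomial.IsSymmetric.eq_zero_of_eval_evalPt_eq_zero
    {f : MvPolynomial (Fin n) K} (hsym : f.IsSymmetric)
    (hf : ∀ ν, IsPartition ν → csize ν ≤ f.totalDegree → eval (evalPt ν) f = 0) : f = 0 := by
  by_contra hne
  obtain ⟨μ, hμ, hcoeff, heval⟩ := exists_isPartition_coeff_ne_zero_eval_ne_zero hne hsym
  exact heval (hf μ hμ (csize_le_totalDegree hcoeff))

theorem exists_isSymmetric_eval_evalPt_eq (d : ℕ) (v : (Fin n → ℕ) → K) :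
    ∃ F : MvPolynomial (Fin n) K, F.IsSymmetric ∧ F.totalDegree ≤ d ∧
      ∀ ν, IsPartition ν → csize ν ≤ d → eval (evalPt ν) F = v ν := by
  let Λ := partitionsOfSizeLE n d
  let B : (Λ → K) →ₗ[K] MvPolynomial (Fin n) K :=
    Fintype.linearCombination K fun μ : Λ => monomialSymm K μ.1
  let E : MvPolynomial (Fin n) K →ₗ[K] (Λ → K) :=
    LinearMap.pi fun ν : Λ => (aeval (evalPt ν.1)).toLinearMap
  have hBsym (c : Λ → K) : (B c).IsSymmetric := by
    rw [← mem_symmetricSubalgebra, Fintype.linearCombination_apply]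
    exact Subalgebra.sum_mem _ fun μ _ =>
      Subalgebra.smul_mem _ ((mem_symmetricSubalgebra _).2 (monomialSymm_isSymmetric μ.1)) _
  have hBdeg (c : Λ → K) : (B c).totalDegree ≤ d := by
    rw [Fintype.linearCombination_apply]
    refine (totalDegree_finsetSum _ _).trans (Finset.sup_le fun μ _ => ?_)
    exact (totalDegree_smul_le _ _).trans
      ((totalDegree_monomialSymm_le μ.1).trans (mem_partitionsOfSizeLE.1 μ.2).2)
  have hBcoeff (c : Λ → K) (ν : Λ) : coeff (expOf ν.1) (B c) = c ν := by
    have hmem (μ : Λ) : ν.1 ∈ SnFinset μ.1 ↔ ν = μ := by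
      rw [mem_SnFinset_iff_eq (mem_partitionsOfSizeLE.1 μ.2).1 (mem_partitionsOfSizeLE.1 ν.2).1,
        Subtype.ext_iff]
    simp [B, Fintype.linearCombination_apply, coeff_sum, coeff_monomialSymm, hmem]
  have hinj : Function.Injective (E ∘ₗ B) := by
    rw [← LinearMap.ker_eq_bot, LinearMap.ker_eq_bot']
    intro c hc
    have hB : B c = 0 := (hBsym c).eq_zero_of_eval_evalPt_eq_zero fun ν hν hsize =>
      congrFun hc ⟨ν, mem_partitionsOfSizeLE.2 ⟨hν, hsize.trans (hBdeg c)⟩⟩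
    funext ν
    rw [← hBcoeff c ν, hB, coeff_zero, Pi.zero_apply]
  obtain ⟨c, hc⟩ := LinearMap.injective_iff_surjective.1 hinj fun ν => v ν.1
  refine ⟨B c, hBsym c, hBdeg c, fun ν hν hsize => ?_⟩
  exact congrFun hc ⟨ν, mem_partitionsOfSizeLE.2 ⟨hν, hsize⟩⟩

theorem exists_isPstar {l : Fin n → ℕ} (hl : IsPartition l) : ∃ P, IsPstar l P := by
  obtain ⟨F, hFsym, hFdeg, hFeval⟩ :=
    exists_isSymmetric_eval_evalPt_eq (csize l) fun ν => if ν = l then (1 : K) else 0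
  -- `F ≠ 0`, and `λ` is the only partition at which `F` has a nonzero coefficient and value.
  have hFl : eval (evalPt l) F = 1 := by simpa using hFeval l hl le_rfl
  obtain ⟨μ, hμ, hcoeff, heval⟩ :=
    exists_isPartition_coeff_ne_zero_eval_ne_zero (fun h => by simp [h] at hFl) hFsym
  obtain rfl : μ = l := by
    by_contra hne
    exact heval (by simpa [hne] using hFeval μ hμ ((csize_le_totalDegree hcoeff).trans hFdeg))
  refine ⟨(coeff (expOf μ) F)⁻¹ • F, hFsym.smul _, (totalDegree_smul_le _ _).trans hFdeg,
    by rw [coeff_smul, smul_eq_mul, inv_mul_cancel₀ hcoeff], fun ν hν hsize hne => ?_⟩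
  rw [smul_eval, hFeval ν hν hsize, if_neg hne, mul_zero]

theorem _root_.IsPstar.unique {l : Fin n → ℕ} {P Q : MvPolynomial (Fin n) K} (hP : IsPstar l P)
    (hQ : IsPstar l Q) : P = Q := by
  obtain ⟨hPsym, hPdeg, hPcoeff, hPeval⟩ := hP
  obtain ⟨hQsym, hQdeg, hQcoeff, hQeval⟩ := hQ
  by_contra hne
  obtain ⟨μ, hμ, hcoeff, heval⟩ :=
    exists_isPartition_coeff_ne_zero_eval_ne_zero (sub_ne_zero.2 hne) (hPsym.sub hQsym)
  have hsize : csize μ ≤ csize l :=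
    (csize_le_totalDegree hcoeff).trans ((totalDegree_sub _ _).trans (max_le hPdeg hQdeg))
  by_cases hμl : μ = l
  · exact hcoeff (by rw [hμl, coeff_sub, hPcoeff, hQcoeff, sub_self])
  · exact heval (by rw [map_sub, hPeval μ hμ hsize hμl, hQeval μ hμ hsize hμl, sub_self])

end InterpolationMacdonald

theorem statement2_general (n : ℕ) (l : Fin n → ℕ) (hl : IsPartition l) :
    ∃! P : MvPolynomial (Fin n) K, P.IsSymmetric ∧ P.totalDegree ≤ csize l ∧
      coeff (expOf l) P = 1 ∧
      ∀ ν : Fin n → ℕ, IsPartition ν → csize ν ≤ csize l → ν ≠ l →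
        eval (evalPt ν) P = 0 := by
  obtain ⟨P, hP⟩ := InterpolationMacdonald.exists_isPstar hl
  exact ⟨P, hP, fun Q hQ => IsPstar.unique hQ hP⟩

/-- existence and uniqueness of the interpolation Macdonald
polynomial `P*_λ`. -/
theorem statement2 (n : ℕ) (hn : 1 ≤ n) (l : Fin n → ℕ) (hl : IsPartition l) :
    ∃! P : MvPolynomial (Fin n) K, P.IsSymmetric ∧ P.totalDegree ≤ csize l ∧
      coeff (expOf l) P = 1 ∧
      ∀ ν : Fin n → ℕ, IsPartition ν → csize ν ≤ csize l → ν ≠ l →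
        eval (evalPt ν) P = 0 :=
  statement2_general n l hl
end
end
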